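/- Let b, b̃ ∈ ℝ³, r, r̃ ≥ 0, d, d̃ ∈ S², and let h, k, k̃ be unit vectors with h ⟂ d, h ⟂ d̃ and (h,k,d), (h,k̃,d̃) orthonormal bases with the same orientation. For φ ∈ [0,2π) consider the diagonal coupling x(φ) = b + r cos φ · k + r sin φ · h and y(φ) = b̃ + r̃ cos φ · k̃ + r̃ sin φ · h. Then (1/(2π)) ∫₀^{2π} |x(φ) − y(φ)|² dφ = |b−b̃|² + r² + r̃² − r r̃ (1 + d·d̃). -/

import Mathlib

/-!
Pointwise, `x(φ) - y(φ) = (b - b̃) + cos φ • (r k - r̃ k̃) + sin φ • ((r - r̃) h)`; over a period the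
cross terms average to `0` and `cos²`, `sin²` to `1/2`, which leaves
`|b - b̃|² + (r² + r̃² - 2 r r̃ k·k̃ + (r - r̃)²) / 2`. The geometric input is `k·k̃ = d·d̃`: `d` and
`d̃` are orthogonal to the orthonormal pairs `(h, k)`, `(h, k̃)`, hence equal `ε (h × k)` and
`ε̃ (h × k̃)`; equal orientation means `ε = ε̃`, so `ε ε̃ = |d|² = 1`, and Lagrange's identity gives
`(h × k)·(h × k̃) = k·k̃`.
-/

open Real

/-- The cross product on `ℝ³` (as `EuclideanSpace ℝ (Fin 3)`). -/
noncomputable def cross3 (x y : EuclideanSpace ℝ (Fin 3)) : EuclideanSpace ℝ (Fin 3) :=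
  (WithLp.equiv 2 (Fin 3 → ℝ)).symm
    ![x 1 * y 2 - x 2 * y 1, x 2 * y 0 - x 0 * y 2, x 0 * y 1 - x 1 * y 0]

open Matrix

section CrossProduct

variable {R : Type*} [CommRing R] {h k v : Fin 3 → R}

theorem eq_dotProduct_cross_smul_cross (hh : h ⬝ᵥ h = 1) (hk : k ⬝ᵥ k = 1) (hhk : h ⬝ᵥ k = 0)
    (hhv : h ⬝ᵥ v = 0) (hkv : k ⬝ᵥ v = 0) : v = (v ⬝ᵥ h ⨯₃ k) • h ⨯₃ k := by
  -- with `n = h ⨯₃ k`, the triple product expansion gives `n ⨯₃ v = 0` and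
  -- `n ⨯₃ (n ⨯₃ v) = (n ⬝ᵥ v) • n - v`
  have hnv : h ⨯₃ k ⨯₃ v = 0 := by simp [cross_cross_eq_smul_sub_smul, hhv, hkv]
  have hnn : h ⨯₃ k ⬝ᵥ h ⨯₃ k = 1 := by
    rw [cross_dot_cross, hh, hk, hhk, dotProduct_comm k h, hhk]; ring
  have hnnv := cross_cross_eq_smul_sub_smul' (h ⨯₃ k) (h ⨯₃ k) v
  rw [hnv, LinearMap.map_zero, hnn, one_smul, dotProduct_comm] at hnnv
  exact (sub_eq_zero.mp hnnv.symm).symm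

theorem dotProduct_eq_of_triple_product_eq {d dt kt : Fin 3 → R}
    (hh : h ⬝ᵥ h = 1) (hk : k ⬝ᵥ k = 1) (hkt : kt ⬝ᵥ kt = 1) (hd : d ⬝ᵥ d = 1)
    (hhk : h ⬝ᵥ k = 0) (hhkt : h ⬝ᵥ kt = 0) (hhd : h ⬝ᵥ d = 0) (hkd : k ⬝ᵥ d = 0)
    (hhdt : h ⬝ᵥ dt = 0) (hktdt : kt ⬝ᵥ dt = 0) (hor : d ⬝ᵥ h ⨯₃ k = dt ⬝ᵥ h ⨯₃ kt) :
    d ⬝ᵥ dt = k ⬝ᵥ kt := by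
  have hd' := eq_dotProduct_cross_smul_cross hh hk hhk hhd hkd
  have hdt' := eq_dotProduct_cross_smul_cross hh hkt hhkt hhdt hktdt
  rw [← hor] at hdt'
  have hε : (d ⬝ᵥ h ⨯₃ k) * (d ⬝ᵥ h ⨯₃ k) = 1 := by
    calc _ = d ⬝ᵥ (d ⬝ᵥ h ⨯₃ k) • h ⨯₃ k := by rw [dotProduct_smul, smul_eq_mul]
      _ = 1 := by rw [← hd', hd]
  rw [hd', hdt', smul_dotProduct, dotProduct_smul, smul_eq_mul, smul_eq_mul, ← mul_assoc, hε,
    one_mul, cross_dot_cross, hh, dotProduct_comm k h, hhk]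
  ring

end CrossProduct

theorem ofLp_cross3 (x y : EuclideanSpace ℝ (Fin 3)) :
    (cross3 x y).ofLp = x.ofLp ⨯₃ y.ofLp := by
  ext i; fin_cases i <;> simp [cross3, cross_apply]

theorem real_inner_eq_dotProduct {ι : Type*} [Fintype ι] (x y : EuclideanSpace ℝ ι) :
    inner ℝ x y = x.ofLp ⬝ᵥ y.ofLp := by
  simp [EuclideanSpace.inner_eq_star_dotProduct, dotProduct_comm]

section Integral

variable {E : Type*} [NormedAddCommGroup E] [InnerProductSpace ℝ E]

theorem norm_add_smul_add_smul_sq (u p q : E) (a b : ℝ) :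
    ‖u + a • p + b • q‖ ^ 2 = ‖u‖ ^ 2 + 2 * a * inner ℝ u p + 2 * b * inner ℝ u q
      + a ^ 2 * ‖p‖ ^ 2 + b ^ 2 * ‖q‖ ^ 2 + 2 * (a * b) * inner ℝ p q := by
  rw [norm_add_sq_real, norm_add_sq_real, inner_add_left, norm_smul, norm_smul]
  simp only [inner_smul_left, inner_smul_right, Real.norm_eq_abs, mul_pow, sq_abs,
    RCLike.conj_to_real]
  ring

theorem integral_norm_add_cos_smul_add_sin_smul_sq (u p q : E) :
    ∫ φ in (0:ℝ)..(2 * π), ‖u + cos φ • p + sin φ • q‖ ^ 2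
      = 2 * π * ‖u‖ ^ 2 + π * (‖p‖ ^ 2 + ‖q‖ ^ 2) := by
  simp only [norm_add_smul_add_smul_sq]
  rw [intervalIntegral.integral_add, intervalIntegral.integral_add, intervalIntegral.integral_add,
    intervalIntegral.integral_add, intervalIntegral.integral_add]
  · simp [integral_cos_sq, integral_sin_sq, mul_comm (cos _) (sin _), integral_sin_mul_cos₁]
    ring
  all_goals exact (by fun_prop : Continuous _).intervalIntegrable _ _

end Integral

theorem diagonal_coupling_cost_general
    (b bt : EuclideanSpace ℝ (Fin 3)) (r rt : ℝ)
    (d dt h k kt : EuclideanSpace ℝ (Fin 3))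
    (hd : ‖d‖ = 1) (hh : ‖h‖ = 1) (hk : ‖k‖ = 1) (hkt : ‖kt‖ = 1)
    (hhd : (inner ℝ h d) = 0) (hhk : (inner ℝ h k) = 0) (hkd : (inner ℝ k d) = 0)
    (hhdt : (inner ℝ h dt) = 0) (hhkt : (inner ℝ h kt) = 0)
    (hktdt : (inner ℝ kt dt) = 0)
    (hor : (inner ℝ d (cross3 h k)) = (inner ℝ dt (cross3 h kt))) :
    (1/(2*π)) * ∫ φ in (0:ℝ)..(2*π),
        ‖(b + (r * Real.cos φ) • k + (r * Real.sin φ) • h)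
          - (bt + (rt * Real.cos φ) • kt + (rt * Real.sin φ) • h)‖ ^ 2
      = ‖b - bt‖ ^ 2 + r ^ 2 + rt ^ 2 - r * rt * (1 + (inner ℝ d dt)) := by
  have hunit {x : EuclideanSpace ℝ (Fin 3)} (hx : ‖x‖ = 1) : x.ofLp ⬝ᵥ x.ofLp = 1 := by
    rw [← real_inner_eq_dotProduct, real_inner_self_eq_norm_sq, hx, one_pow]
  simp only [real_inner_eq_dotProduct, ofLp_cross3] at hhd hhk hkd hhdt hhkt hktdt hor
  have hdk : inner ℝ d dt = inner ℝ k kt := by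
    simpa only [real_inner_eq_dotProduct] using dotProduct_eq_of_triple_product_eq (hunit hh)
      (hunit hk) (hunit hkt) (hunit hd) hhk hhkt hhd hkd hhdt hktdt hor
  have hdiff (φ : ℝ) : (b + (r * cos φ) • k + (r * sin φ) • h)
      - (bt + (rt * cos φ) • kt + (rt * sin φ) • h)
      = (b - bt) + cos φ • (r • k - rt • kt) + sin φ • ((r - rt) • h) := by module
  have hrk : ‖r • k - rt • kt‖ ^ 2 = r ^ 2 + rt ^ 2 - 2 * r * rt * inner ℝ k kt := by
    rw [norm_sub_sq_real, norm_smul, norm_smul, inner_smul_left, inner_smul_right, hk, hkt]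
    simp only [Real.norm_eq_abs, mul_pow, sq_abs, RCLike.conj_to_real]
    ring
  have hrh : ‖(r - rt) • h‖ ^ 2 = (r - rt) ^ 2 := by
    rw [norm_smul, hh, Real.norm_eq_abs, mul_one, sq_abs]
  simp only [hdiff, integral_norm_add_cos_smul_add_sin_smul_sq, hrk, hrh, hdk]
  field_simp
  ring

/-- Average cost of the diagonal coupling of two circles:
`(1/(2π)) ∫₀^{2π} |x(φ) - y(φ)|² dφ = |b - b̃|² + r² + r̃² - r r̃ (1 + d·d̃)`. -/
theorem diagonal_coupling_cost
    (b bt : EuclideanSpace ℝ (Fin 3)) (r rt : ℝ) (hr : 0 ≤ r) (hrt : 0 ≤ rt)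
    (d dt h k kt : EuclideanSpace ℝ (Fin 3))
    (hd : ‖d‖ = 1) (hdt : ‖dt‖ = 1) (hh : ‖h‖ = 1) (hk : ‖k‖ = 1) (hkt : ‖kt‖ = 1)
    (hhd : (inner ℝ h d) = 0) (hhk : (inner ℝ h k) = 0) (hkd : (inner ℝ k d) = 0)
    (hhdt : (inner ℝ h dt) = 0) (hhkt : (inner ℝ h kt) = 0)
    (hktdt : (inner ℝ kt dt) = 0)
    (hor : (inner ℝ d (cross3 h k)) = (inner ℝ dt (cross3 h kt))) :
    (1/(2*π)) * ∫ φ in (0:ℝ)..(2*π),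
        ‖(b + (r * Real.cos φ) • k + (r * Real.sin φ) • h)
          - (bt + (rt * Real.cos φ) • kt + (rt * Real.sin φ) • h)‖ ^ 2
      = ‖b - bt‖ ^ 2 + r ^ 2 + rt ^ 2 - r * rt * (1 + (inner ℝ d dt)) :=
  diagonal_coupling_cost_general b bt r rt d dt h k kt hd hh hk hkt hhd hhk hkd hhdt hhkt hktdt hor
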